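/- Suppose $\omega_0 = \mu + g$ where $\mu$ is a finite nonnegative measure on $\mathbb{T}^2$ and $g \in L^1(\mathbb{T}^2)$, and let $K_N$ and $\psi_{\rho_N}$ be as in the suitable-initial-data construction with $\|K_N - \psi_{\rho_N}\|_{L^1} \to 0$. Set $\omega_N(\cdot,0) = K_N \ast \omega_0$. Then for any $\epsilon > 0$ there exist $c > 0$ and $N_0$ such that $\int_{\mathbb{T}^2} [\omega_N(\cdot,0) + c]_- \, dx < \epsilon$ for all $N \ge N_0$. -/

import Mathlib

open MeasureTheory Real
open scoped ENNReal

noncomputable section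

instance : Fact (0 < 2 * π) := ⟨by positivity⟩

/-- The two-dimensional torus `𝕋² = (ℝ/2πℤ)²`. -/
abbrev T2 := AddCircle (2 * π) × AddCircle (2 * π)

/-- The negative part `[w]₋ = max(0, -w)`. -/
def negPt (w : ℝ) : ℝ := max 0 (-w)

/-
Pointwise, `[K ∗ ω₀ + c]₋ ≤ |(K - ψ) ∗ ω₀| + [ψ ∗ ω₀ + c]₋`, and `[ψ ∗ ω₀ + c]₋ ≤ [ψ ∗ g + c]₋`
because `ψ ∗ μ ≥ 0`. Jensen's inequality for the probability density `ψ(x - ·)` gives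
`[ψ ∗ g + c]₋ ≤ ψ ∗ [g + c]₋`. Integrating with Fubini yields
`∫ [K ∗ ω₀ + c]₋ ≤ ‖K - ψ‖₁ (μ(𝕋²) + ‖g‖₁) + ‖[g + c]₋‖₁`; the first term is small for large `N`,
and the second for large `c` by dominated convergence.
-/

open Filter Topology Set

instance : (volume : Measure T2).IsAddHaarMeasure := Measure.prod.instIsAddHaarMeasure _ _

instance : (volume : Measure T2).IsNegInvariant :=
  Measure.IsAddHaarMeasure.isNegInvariant_of_regular _

lemma negPt_nonneg (w : ℝ) : 0 ≤ negPt w := le_max_left _ _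

lemma negPt_le_abs (w : ℝ) : negPt w ≤ |w| := max_le (abs_nonneg _) (neg_le_abs _)

lemma neg_negPt_le (w : ℝ) : -negPt w ≤ w := neg_le.mpr (le_max_right _ _)

lemma continuous_negPt : Continuous negPt := continuous_const.max continuous_neg

lemma negPt_antitone : Antitone negPt := fun _ _ h => max_le_max le_rfl (neg_le_neg h)

lemma negPt_eq_zero_of_nonneg {w : ℝ} (h : 0 ≤ w) : negPt w = 0 := max_eq_left (neg_nonpos.mpr h)

lemma negPt_le_of_neg_le {u r : ℝ} (hr : 0 ≤ r) (h : -r ≤ u) : negPt u ≤ r :=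
  max_le hr (neg_le.mp h)

lemma negPt_le_negPt_add_abs_sub (u v : ℝ) : negPt u ≤ negPt v + |u - v| :=
  max_le (add_nonneg (negPt_nonneg v) (abs_nonneg _)) <| by
    linarith [neg_negPt_le v, neg_abs_le (u - v)]

lemma negPt_add_add_le {a a' b b' c : ℝ} (ha' : 0 ≤ a') :
    negPt (a + b + c) ≤ |a - a'| + |b - b'| + negPt (b' + c) :=
  calc negPt (a + b + c)
      ≤ negPt (a' + b' + c) + |(a - a') + (b - b')| := by
        convert negPt_le_negPt_add_abs_sub _ _ using 3; ring
    _ ≤ negPt (b' + c) + (|a - a'| + |b - b'|) :=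
        add_le_add (negPt_antitone (by linarith)) (abs_add_le _ _)
    _ = _ := by ring

section Integrals

variable {α : Type*} [MeasurableSpace α] {m : Measure α}

lemma MeasureTheory.Integrable.negPt {f : α → ℝ} (hf : Integrable f m) :
    Integrable (fun y => negPt (f y)) m :=
  hf.abs.mono' (continuous_negPt.comp_aestronglyMeasurable hf.aestronglyMeasurable) <|
    ae_of_all _ fun y => by rw [norm_of_nonneg (negPt_nonneg _)]; exact negPt_le_abs _

lemma MeasureTheory.Integrable.continuous_mul_of_compactSpace [TopologicalSpace α] [CompactSpace α]
    [OpensMeasurableSpace α] {φ w : α → ℝ} (hφ : Continuous φ) (hw : Integrable w m) :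
    Integrable (fun y => φ y * w y) m :=
  let ⟨_, hC⟩ := (HasCompactSupport.of_compactSpace φ).exists_bound_of_continuous hφ
  hw.bdd_mul hφ.aestronglyMeasurable (ae_of_all _ hC)

lemma negPt_integral_mul_le {φ w : α → ℝ} (hφ : ∀ y, 0 ≤ φ y)
    (hφw : Integrable (fun y => φ y * w y) m)
    (hφn : Integrable (fun y => φ y * negPt (w y)) m) :
    negPt (∫ y, φ y * w y ∂m) ≤ ∫ y, φ y * negPt (w y) ∂m :=
  negPt_le_of_neg_le (integral_nonneg fun y => mul_nonneg (hφ y) (negPt_nonneg _)) <| by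
    rw [← integral_neg]
    refine integral_mono hφn.neg hφw fun y => ?_
    simpa only [mul_neg] using mul_le_mul_of_nonneg_left (neg_negPt_le (w y)) (hφ y)

lemma tendsto_integral_negPt_add_nat {g : α → ℝ} (hg : Integrable g m) :
    Tendsto (fun n : ℕ => ∫ y, negPt (g y + n) ∂m) atTop (𝓝 0) := by
  have hlim : ∀ y, Tendsto (fun n : ℕ => negPt (g y + n)) atTop (𝓝 0) := fun y =>
    tendsto_const_nhds.congr' <| (tendsto_natCast_atTop_atTop.eventually_ge_atTop (-g y)).mono
      fun n hn => (negPt_eq_zero_of_nonneg (by linarith)).symm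
  have hbound : ∀ (n : ℕ) y, ‖negPt (g y + n)‖ ≤ |g y| := fun n y => by
    rw [norm_of_nonneg (negPt_nonneg _)]
    exact (negPt_antitone (le_add_of_nonneg_right n.cast_nonneg)).trans (negPt_le_abs _)
  simpa using tendsto_integral_of_dominated_convergence (fun y => |g y|)
    (fun n => continuous_negPt.comp_aestronglyMeasurable
      (hg.aestronglyMeasurable.add aestronglyMeasurable_const))
    hg.abs (fun n => ae_of_all _ (hbound n)) (ae_of_all _ hlim)

lemma exists_pos_integral_negPt_add_lt {g : α → ℝ} (hg : Integrable g m) {ε : ℝ} (hε : 0 < ε) :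
    ∃ c > (0 : ℝ), ∫ y, negPt (g y + c) ∂m < ε := by
  obtain ⟨n, hn, hpos⟩ :=
    (((tendsto_integral_negPt_add_nat hg).eventually (gt_mem_nhds hε)).and
      (eventually_gt_atTop 0)).exists
  exact ⟨n, Nat.cast_pos.mpr hpos, hn⟩

end Integrals

/-- The convolution `h ∗ (w • ν)`; a measure `μ` enters as `convolve h (fun _ => 1) μ`. -/
def convolve {G : Type*} [Sub G] [MeasurableSpace G] (h w : G → ℝ) (ν : Measure G) (x : G) : ℝ :=
  ∫ y, h (x - y) * w y ∂ν

section Convolution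

variable {G : Type*} [AddCommGroup G] [TopologicalSpace G] [IsTopologicalAddGroup G]
  [CompactSpace G] [MeasurableSpace G] [BorelSpace G]
  {h w : G → ℝ} {m ν : Measure G}

lemma integrable_comp_sub_mul (hh : Continuous h) (hw : Integrable w ν) (x : G) :
    Integrable (fun y => h (x - y) * w y) ν :=
  hw.continuous_mul_of_compactSpace (hh.comp (continuous_const.sub continuous_id))

lemma integrable_prod_comp_sub_mul [SecondCountableTopology G] [IsFiniteMeasure m] [SFinite ν]
    (hh : Continuous h) (hw : Integrable w ν) :
    Integrable (fun p : G × G => h (p.1 - p.2) * w p.2) (m.prod ν) := by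
  simpa only [one_mul, Function.comp_def] using
    ((integrable_const (1 : ℝ)).mul_prod hw).continuous_mul_of_compactSpace
      (hh.comp continuous_sub)

lemma integrable_convolve [SecondCountableTopology G] [IsFiniteMeasure m] [SFinite ν]
    (hh : Continuous h) (hw : Integrable w ν) : Integrable (convolve h w ν) m :=
  (integrable_prod_comp_sub_mul hh hw).integral_prod_left

lemma integral_convolve [SecondCountableTopology G] [IsFiniteMeasure m] [m.IsAddRightInvariant]
    [SFinite ν] (hh : Continuous h) (hw : Integrable w ν) :
    ∫ x, convolve h w ν x ∂m = (∫ z, h z ∂m) * ∫ y, w y ∂ν := by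
  simp only [convolve]
  rw [integral_integral_swap (integrable_prod_comp_sub_mul hh hw), ← integral_const_mul]
  congr 1 with y
  rw [integral_mul_const, integral_sub_right_eq_self h y]

lemma abs_convolve_sub_convolve_le {K ψ : G → ℝ} (hK : Continuous K) (hψ : Continuous ψ)
    (hw : Integrable w ν) (x : G) :
    |convolve K w ν x - convolve ψ w ν x| ≤
      convolve (fun z => |K z - ψ z|) (fun y => |w y|) ν x := by
  simp only [convolve]
  rw [← integral_sub (integrable_comp_sub_mul hK hw x) (integrable_comp_sub_mul hψ hw x)]
  refine abs_integral_le_integral_abs.trans_eq (integral_congr_ae (ae_of_all _ fun y => ?_))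
  simp only [← sub_mul, abs_mul]

lemma negPt_convolve_add_le [IsFiniteMeasure m] [m.IsAddLeftInvariant] [m.IsNegInvariant]
    {ψ : G → ℝ} (hψ : Continuous ψ) (hψ0 : ∀ z, 0 ≤ ψ z) (hψ1 : ∫ z, ψ z ∂m = 1)
    (hw : Integrable w m) (c : ℝ) (x : G) :
    negPt (convolve ψ w m x + c) ≤ convolve ψ (fun y => negPt (w y + c)) m x := by
  have hwc : Integrable (fun y => w y + c) m := hw.add (integrable_const c)
  have hmass : ∫ y, ψ (x - y) ∂m = 1 := by rw [integral_sub_left_eq_self ψ m x, hψ1]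
  have hψx : Integrable (fun y => ψ (x - y)) m :=
    (hψ.comp (continuous_const.sub continuous_id)).integrable_of_hasCompactSupport
      (HasCompactSupport.of_compactSpace _)
  have hsplit : ∫ y, ψ (x - y) * (w y + c) ∂m = convolve ψ w m x + c := by
    simp only [mul_add]
    rw [integral_add (integrable_comp_sub_mul hψ hw x) (hψx.mul_const c), integral_mul_const,
      hmass, one_mul, convolve]
  rw [← hsplit]
  exact negPt_integral_mul_le (fun y => hψ0 _) (integrable_comp_sub_mul hψ hwc x)
    (integrable_comp_sub_mul hψ hwc.negPt x)

lemma negPt_convolve_add_convolve_add_le [IsFiniteMeasure m] [m.IsAddLeftInvariant]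
    [m.IsNegInvariant] [IsFiniteMeasure ν] {K ψ g : G → ℝ} (hK : Continuous K)
    (hψ : Continuous ψ) (hψ0 : ∀ z, 0 ≤ ψ z) (hψ1 : ∫ z, ψ z ∂m = 1) (hg : Integrable g m)
    (c : ℝ) (x : G) :
    negPt (convolve K (fun _ => 1) ν x + convolve K g m x + c) ≤
      convolve (fun z => |K z - ψ z|) (fun _ => 1) ν x +
        convolve (fun z => |K z - ψ z|) (fun y => |g y|) m x +
        convolve ψ (fun y => negPt (g y + c)) m x := by
  have hψν : 0 ≤ convolve ψ (fun _ => 1) ν x :=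
    integral_nonneg fun y => mul_nonneg (hψ0 _) zero_le_one
  have hν : |convolve K (fun _ => 1) ν x - convolve ψ (fun _ => 1) ν x| ≤
      convolve (fun z => |K z - ψ z|) (fun _ => 1) ν x := by
    simpa using abs_convolve_sub_convolve_le hK hψ (integrable_const (1 : ℝ)) x
  exact (negPt_add_add_le hψν).trans <| add_le_add
    (add_le_add hν (abs_convolve_sub_convolve_le hK hψ hg x))
    (negPt_convolve_add_le hψ hψ0 hψ1 hg c x)

end Convolution

theorem integral_negPt_convolve_add_le {G : Type*} [AddCommGroup G] [TopologicalSpace G]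
    [IsTopologicalAddGroup G] [CompactSpace G] [SecondCountableTopology G] [MeasurableSpace G]
    [BorelSpace G] {m μ : Measure G} [IsFiniteMeasure m] [m.IsAddLeftInvariant]
    [m.IsNegInvariant] [IsFiniteMeasure μ] {K ψ g : G → ℝ} (hK : Continuous K)
    (hψ : Continuous ψ) (hψ0 : ∀ z, 0 ≤ ψ z) (hψ1 : ∫ z, ψ z ∂m = 1) (hg : Integrable g m)
    (c : ℝ) :
    ∫ x, negPt ((∫ y, K (x - y) ∂μ) + (∫ y, K (x - y) * g y ∂m) + c) ∂m ≤
      (∫ z, |K z - ψ z| ∂m) * (μ.real univ + ∫ y, |g y| ∂m) + ∫ y, negPt (g y + c) ∂m := by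
  have hKψ : Continuous fun z => |K z - ψ z| := (hK.sub hψ).abs
  have hgc : Integrable (fun y => negPt (g y + c)) m := (hg.add (integrable_const c)).negPt
  have h1 := integrable_convolve (m := m) hKψ (integrable_const (1 : ℝ) (μ := μ))
  have h2 := integrable_convolve (m := m) hKψ hg.abs
  have h3 := integrable_convolve (m := m) hψ hgc
  calc ∫ x, negPt ((∫ y, K (x - y) ∂μ) + (∫ y, K (x - y) * g y ∂m) + c) ∂m
      = ∫ x, negPt (convolve K (fun _ => 1) μ x + convolve K g m x + c) ∂m := by
        simp only [convolve, mul_one]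
    _ ≤ ∫ x, (convolve (fun z => |K z - ψ z|) (fun _ => 1) μ x +
          convolve (fun z => |K z - ψ z|) (fun y => |g y|) m x +
          convolve ψ (fun y => negPt (g y + c)) m x) ∂m :=
        integral_mono_of_nonneg (ae_of_all _ fun _ => negPt_nonneg _) ((h1.add h2).add h3)
          (ae_of_all _ (negPt_convolve_add_convolve_add_le hK hψ hψ0 hψ1 hg c))
    _ = _ := by
        rw [integral_add ?_ h3, integral_add h1 h2, integral_convolve hKψ (integrable_const 1),
          integral_convolve hKψ hg.abs, integral_convolve hψ hgc, hψ1]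
        · simp only [integral_const, smul_eq_mul, mul_one]
          ring
        · exact h1.add h2

/-- Suppose `ω₀ = μ + g` with `μ` a finite nonnegative measure on `𝕋²` and `g ∈ L¹(𝕋²)`.
Let `ψ_N ≥ 0` be smooth probability densities and `K_N` continuous kernels with
`‖K_N - ψ_N‖_{L¹} → 0`, and set `ω_N(·,0) = K_N ∗ ω₀ = K_N ∗ μ + K_N ∗ g`. Then for any
`ε > 0` there exist `c > 0` and `N₀` such that `∫ [ω_N(·,0) + c]₋ dx < ε` for all `N ≥ N₀`. -/
theorem stmt13 (μ : Measure T2) [IsFiniteMeasure μ] (g : T2 → ℝ)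
    (hg : Integrable g volume) (K ψ : ℕ → T2 → ℝ)
    (hK : ∀ N, Continuous (K N)) (hψc : ∀ N, Continuous (ψ N))
    (hψ0 : ∀ N x, 0 ≤ ψ N x) (hψ1 : ∀ N, ∫ x, ψ N x = 1)
    (hconv : Filter.Tendsto (fun N => ∫ x, |K N x - ψ N x|) Filter.atTop (nhds 0)) :
    ∀ ε > (0 : ℝ), ∃ c > (0 : ℝ), ∃ N₀ : ℕ, ∀ N ≥ N₀,
      (∫ x, negPt ((∫ y, K N (x - y) ∂μ) + (∫ y, K N (x - y) * g y) + c)) < ε := by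
  intro ε hε
  obtain ⟨c, hc, hgc⟩ := exists_pos_integral_negPt_add_lt hg (half_pos hε)
  have hsmall : Tendsto (fun N => (∫ x, |K N x - ψ N x|) * (μ.real univ + ∫ y, |g y|))
      atTop (𝓝 0) := by
    simpa using hconv.mul_const (μ.real univ + ∫ y, |g y|)
  obtain ⟨N₀, hN₀⟩ := eventually_atTop.mp (hsmall.eventually_lt_const (half_pos hε))
  refine ⟨c, hc, N₀, fun N hN => ?_⟩
  calc _ ≤ _ := integral_negPt_convolve_add_le (hK N) (hψc N) (hψ0 N) (hψ1 N) hg c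
    _ < ε / 2 + ε / 2 := add_lt_add (hN₀ N hN) hgc
    _ = ε := add_halves ε
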